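/- Under the hypotheses of the previous CVaR comparison, |CVaR_α(F) - CVaR_α(G)| ≤ (max(F⁻¹(α), G⁻¹(α)) / α) · sup_x |F(x) - G(x)|. -/

import Mathlib

/-!
Both suprema are attained, at `νF` and `νG`, so evaluating the objective of `G` at `νF` and that of
`F` at `νG` bounds `cvar α F - cvar α G` from both sides. At a point `ν ≥ 0` the two objectives differ
by `α⁻¹ ∫₀^ν (G - F)`, which is at most `ν / α · sup |F - G|`. The suprema are genuine (not the junk
value of an unbounded `⨆`) because `α ≤ 1` and the CDFs equal `1` beyond some bound.
-/

open MeasureTheory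

/-- A CDF of a nonnegative bounded random variable, as a function. -/
def IsBoundedNonnegCDF (F : ℝ → ℝ) : Prop :=
  Monotone F ∧ (∀ x, F x ∈ Set.Icc (0:ℝ) 1) ∧ (∀ x < 0, F x = 0) ∧ ∃ B : ℝ, ∀ x ≥ B, F x = 1

/-- Conditional value at risk via the Rockafellar–Uryasev variational formula,
using `E[(ν - X)⁺] = ∫₀^ν F(y) dy` for nonnegative variables. -/
noncomputable def cvar (α : ℝ) (F : ℝ → ℝ) : ℝ :=
  ⨆ ν : ℝ, (ν - α⁻¹ * ∫ y in (0:ℝ)..ν, F y)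

open Set

theorem abs_ciSup_sub_ciSup_le {ι : Type*} {f g : ι → ℝ} {x y : ι} {c : ℝ}
    (hf : BddAbove (range f)) (hg : BddAbove (range g))
    (hfx : ⨆ i, f i = f x) (hgy : ⨆ i, g i = g y)
    (hx : |f x - g x| ≤ c) (hy : |f y - g y| ≤ c) :
    |(⨆ i, f i) - ⨆ i, g i| ≤ c := by
  rw [hfx, hgy, abs_sub_le_iff]
  constructor
  · linarith [le_ciSup hg x, (abs_le.1 hx).2]
  · linarith [le_ciSup hf y, (abs_le.1 hy).1]

noncomputable def cvarObjective (α : ℝ) (F : ℝ → ℝ) (ν : ℝ) : ℝ :=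
  ν - α⁻¹ * ∫ y in (0:ℝ)..ν, F y

theorem cvar_eq_iSup_cvarObjective (α : ℝ) (F : ℝ → ℝ) :
    cvar α F = ⨆ ν, cvarObjective α F ν :=
  rfl

theorem abs_cvarObjective_sub_le {F G : ℝ → ℝ} {α ν D : ℝ}
    (hF : IntervalIntegrable F volume 0 ν) (hG : IntervalIntegrable G volume 0 ν)
    (hα : 0 < α) (hν : 0 ≤ ν) (hD : ∀ x, |F x - G x| ≤ D) :
    |cvarObjective α F ν - cvarObjective α G ν| ≤ ν / α * D := by
  have hint : |(∫ y in (0:ℝ)..ν, F y) - ∫ y in (0:ℝ)..ν, G y| ≤ D * ν := by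
    have := intervalIntegral.norm_integral_le_of_norm_le_const (a := 0) (b := ν)
      (f := fun y => F y - G y) fun x _ => hD x
    rwa [intervalIntegral.integral_sub hF hG, sub_zero, abs_of_nonneg hν] at this
  calc |cvarObjective α F ν - cvarObjective α G ν|
      = |α⁻¹ * ((∫ y in (0:ℝ)..ν, F y) - ∫ y in (0:ℝ)..ν, G y)| := by
        rw [cvarObjective, cvarObjective, abs_sub_comm]; ring_nf
    _ = α⁻¹ * |(∫ y in (0:ℝ)..ν, F y) - ∫ y in (0:ℝ)..ν, G y| := by
        rw [abs_mul, abs_of_pos (inv_pos.2 hα)]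
    _ ≤ α⁻¹ * (D * ν) := by gcongr
    _ = ν / α * D := by ring

namespace IsBoundedNonnegCDF

variable {H : ℝ → ℝ}

theorem abs_sub_le_one {G : ℝ → ℝ} (hH : IsBoundedNonnegCDF H) (hG : IsBoundedNonnegCDF G)
    (x : ℝ) : |H x - G x| ≤ 1 :=
  abs_sub_le_of_nonneg_of_le (hH.2.1 x).1 (hH.2.1 x).2 (hG.2.1 x).1 (hG.2.1 x).2

theorem integral_eq_zero_of_nonpos (hH : IsBoundedNonnegCDF H) {ν : ℝ} (hν : ν ≤ 0) :
    ∫ y in (0:ℝ)..ν, H y = 0 := by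
  rw [intervalIntegral.integral_symm, intervalIntegral.integral_of_le hν,
    integral_Ioc_eq_integral_Ioo,
    setIntegral_eq_zero_of_forall_eq_zero fun y hy => hH.2.2.1 y hy.2, neg_zero]

theorem exists_sub_le_integral (hH : IsBoundedNonnegCDF H) :
    ∃ B ≥ 0, ∀ ν ≥ 0, ν - B ≤ ∫ y in (0:ℝ)..ν, H y := by
  obtain ⟨hmono, hIcc, -, B, hB⟩ := hH
  refine ⟨max B 0, le_max_right _ _, fun ν hν => ?_⟩
  have hnonneg : ∀ a b : ℝ, a ≤ b → 0 ≤ ∫ y in a..b, H y := fun a b hab =>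
    intervalIntegral.integral_nonneg hab fun y _ => (hIcc y).1
  rcases le_total ν (max B 0) with hνB | hBν
  · linarith [hnonneg 0 ν hν]
  · have htail : ν - max B 0 ≤ ∫ y in (max B 0)..ν, H y := by
      simpa using intervalIntegral.integral_mono_on hBν intervalIntegrable_const
        (hmono.intervalIntegrable (μ := volume)) fun y hy => (hB y (le_of_max_le_left hy.1)).ge
    rw [← intervalIntegral.integral_add_adjacent_intervals hmono.intervalIntegrable
      hmono.intervalIntegrable]
    linarith [hnonneg 0 _ (le_max_right B 0)]

theorem bddAbove_cvarObjective (hH : IsBoundedNonnegCDF H) {α : ℝ} (hα : α ∈ Ioc (0:ℝ) 1) :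
    BddAbove (range (cvarObjective α H)) := by
  obtain ⟨B, hB0, hB⟩ := hH.exists_sub_le_integral
  have hα1 : 1 ≤ α⁻¹ := (one_le_inv₀ hα.1).mpr hα.2
  refine ⟨α⁻¹ * B, forall_mem_range.2 fun ν => ?_⟩
  rcases le_total ν 0 with hν | hν
  · rw [cvarObjective, hH.integral_eq_zero_of_nonpos hν, mul_zero, sub_zero]
    exact hν.trans (by positivity)
  · calc cvarObjective α H ν ≤ ν - α⁻¹ * (ν - B) := by
          rw [cvarObjective]; gcongr; exact hB ν hν
      _ = α⁻¹ * B - (α⁻¹ - 1) * ν := by ring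
      _ ≤ α⁻¹ * B := sub_le_self _ (mul_nonneg (by linarith) hν)

end IsBoundedNonnegCDF

theorem cvar_diff_le_ks (F G : ℝ → ℝ)
    (hF : IsBoundedNonnegCDF F) (hG : IsBoundedNonnegCDF G)
    (α : ℝ) (hα : α ∈ Set.Ioc (0:ℝ) 1)
    (νF νG : ℝ) (hνF0 : 0 ≤ νF) (hνG0 : 0 ≤ νG)
    (hνF : cvar α F = νF - α⁻¹ * ∫ y in (0:ℝ)..νF, F y)
    (hνG : cvar α G = νG - α⁻¹ * ∫ y in (0:ℝ)..νG, G y) :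
    |cvar α F - cvar α G| ≤ (max νF νG / α) * ⨆ x : ℝ, |F x - G x| := by
  set D := ⨆ x : ℝ, |F x - G x|
  have hFG : ∀ x, |F x - G x| ≤ D :=
    le_ciSup ⟨1, forall_mem_range.2 (hF.abs_sub_le_one hG)⟩
  have hD0 : 0 ≤ D := (abs_nonneg _).trans (hFG 0)
  have hbound : ∀ ν, 0 ≤ ν → ν ≤ max νF νG →
      |cvarObjective α F ν - cvarObjective α G ν| ≤ max νF νG / α * D := fun ν hν hνmax =>
    (abs_cvarObjective_sub_le hF.1.intervalIntegrable hG.1.intervalIntegrable hα.1 hν hFG).trans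
      (by gcongr; exact hα.1.le)
  rw [cvar_eq_iSup_cvarObjective] at hνF hνG
  rw [cvar_eq_iSup_cvarObjective, cvar_eq_iSup_cvarObjective]
  exact abs_ciSup_sub_ciSup_le (hF.bddAbove_cvarObjective hα) (hG.bddAbove_cvarObjective hα)
    hνF hνG (hbound νF hνF0 (le_max_left _ _)) (hbound νG hνG0 (le_max_right _ _))
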